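/- Let G be a color-looped graph with n vertices, m edges and c loops with m + c = 2n. Then the matrix M^c_{2,0,2}(G) has rank 2n over the rational function field ℝ(a_e, b_e : e edge) if and only if G is color-looped-(2,2). -/

import Mathlib

/-!
STATEMENT 18: the specialized matrix M^c_{2,0,2}(G) represents the color-looped-(2,2)
property.
Let G be a color-looped graph with n vertices, m edges and c loops with m + c = 2n.
Then M^c_{2,0,2}(G) has rank 2n over the rational function field ℝ(a_e, b_e : e edge)
iff G is color-looped-(2,2).
-/

open MvPolynomial

/-- A looped graph. -/
structure LGraph (V E L : Type) where
  ends : E → V × V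
  ne : ∀ e, (ends e).1 ≠ (ends e).2
  loopAt : L → V

namespace LGraph

variable {V E L : Type}

noncomputable def edgeCount (G : LGraph V E L) (S : Finset V) : ℕ :=
  Nat.card {e : E // (G.ends e).1 ∈ S ∧ (G.ends e).2 ∈ S}

noncomputable def loopCount (G : LGraph V E L) (S : Finset V) : ℕ :=
  Nat.card {l : L // G.loopAt l ∈ S}

/-- A looped-(2,2) graph. -/
def IsLooped22 (G : LGraph V E L) [Fintype V] [Fintype E] [Fintype L] : Prop :=
  (∀ S : Finset V, G.edgeCount S ≤ 2 * S.card - 2) ∧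
  (∀ S : Finset V, G.edgeCount S + G.loopCount S ≤ 2 * S.card) ∧
  Fintype.card E + Fintype.card L = 2 * Fintype.card V

/-- The simple graph on `V` underlying the edges of `G` satisfying `P`. -/
def subSG (G : LGraph V E L) (P : E → Prop) : SimpleGraph V :=
  SimpleGraph.fromRel fun u v => ∃ e, P e ∧ G.ends e = (u, v)

/-- The edges satisfying `P` and the loops satisfying `Q` form a spanning looped
forest. -/
def IsLoopedForestOn (G : LGraph V E L) (P : E → Prop) (Q : L → Prop) : Prop :=
  (∀ e f, P e → P f →
      s((G.ends e).1, (G.ends e).2) = s((G.ends f).1, (G.ends f).2) → e = f) ∧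
  (G.subSG P).IsAcyclic ∧
  ∀ comp : (G.subSG P).ConnectedComponent,
    Nat.card {l : L // Q l ∧ (G.subSG P).connectedComponentMk (G.loopAt l) = comp} = 1

/-- A color-looped graph (loops colored by `color`: `true` = red, `false` = blue) is
color-looped-(2,2) if it is looped-(2,2) and its edges can be partitioned into a red
forest and a blue forest such that each monochromatic tree spans exactly one loop of its
color. -/
def IsColorLooped22 (G : LGraph V E L) (color : L → Bool)
    [Fintype V] [Fintype E] [Fintype L] : Prop :=
  G.IsLooped22 ∧
  ∃ ecol : E → Bool, ∀ b : Bool,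
    G.IsLoopedForestOn (fun e => ecol e = b) (fun l => color l = b)

end LGraph

/-- The rational function field `ℝ(a_e, b_e : e ∈ E)`; `Sum.inl e` is `a_e`, `Sum.inr e`
is `b_e`. -/
abbrev EdgeField (E : Type) := FractionRing (MvPolynomial (E ⊕ E) ℝ)

noncomputable def edgeVar (E : Type) (v : E ⊕ E) : EdgeField E :=
  algebraMap (MvPolynomial (E ⊕ E) ℝ) (EdgeField E) (X v)

/-- The specialized matrix `M^c_{2,0,2}(G)`: the row of edge `e = ij` has entries
`a_e, b_e` in the two columns of vertex `i`, entries `−a_e, −b_e` in the two columns of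
vertex `j`, and zeros elsewhere; the row of a red loop on vertex `i` has entry `1` in
the `x`-column of `i`, the row of a blue loop on vertex `i` has entry `1` in the
`y`-column of `i`, and zeros elsewhere. -/
noncomputable def M202c {V E L : Type} [DecidableEq V]
    (G : LGraph V E L) (color : L → Bool) :
    Matrix (E ⊕ L) (V ⊕ V) (EdgeField E) := fun row col =>
  match row with
  | Sum.inl e =>
      match col with
      | Sum.inl v =>
          if v = (G.ends e).1 then edgeVar E (Sum.inl e)
          else if v = (G.ends e).2 then -edgeVar E (Sum.inl e) else 0
      | Sum.inr v =>
          if v = (G.ends e).1 then edgeVar E (Sum.inr e)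
          else if v = (G.ends e).2 then -edgeVar E (Sum.inr e) else 0
  | Sum.inr l =>
      match col with
      | Sum.inl v => if v = G.loopAt l ∧ color l = true then 1 else 0
      | Sum.inr v => if v = G.loopAt l ∧ color l = false then 1 else 0

/-!
Since `m + c = 2n` the matrix is square after reindexing, so full rank means nonzero determinant.
Every edge row is `a_e` times a row supported on the red columns plus `b_e` times a row
supported on the blue ones, so by multilinearity the determinant is a sum over all red/blue
colourings `g` of the edges of a monomial times `det N_g`, where `N_g` is the real matrix in
which edge `e` keeps only its colour-`g e` part. Hence it is nonzero iff some `det N_g` is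
(for the converse, specialise `a_e, b_e` to the indicators of `g`). `N_g` is block diagonal by
colour, each block being the incidence matrix of one colour class together with its loops:
independence of its rows excludes parallel edges, cycles and two loops in one tree, while a
tree without a loop carries a kernel vector (its indicator). The sparsity conditions follow
from independence of the rows alone: the rows supported on `S` use only `2|S|` columns, and
the edge rows moreover have both block sums zero, which costs two more dimensions.
-/

namespace Matrix

variable {m n κ K : Type*} [Fintype n]

theorem det_of_sum_rows [DecidableEq n] [Fintype κ] [CommRing K]
    (c : n → κ → K) (B : n → κ → n → K) :
    (of fun i j => ∑ k, c i k * B i k j).det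
      = ∑ f : n → κ, (∏ i, c i (f i)) * (of fun i => B i (f i)).det := by
  have hrows : (of fun i j => ∑ k, c i k * B i k j) = fun i => ∑ k, c i k • B i k := by
    ext i j
    simp [Finset.sum_apply]
  have := (detRowAlternating : (n → K) [⋀^n]→ₗ[K] K).toMultilinearMap.map_sum
    fun i k => c i k • B i k
  simp only [AlternatingMap.coe_multilinearMap, AlternatingMap.map_smul_univ, smul_eq_mul] at this
  rw [hrows]
  exact this

theorem exists_det_ne_zero_of_det_of_sum_rows_ne_zero [DecidableEq n] [Fintype κ] [CommRing K]
    {c : n → κ → K} {B : n → κ → n → K}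
    (h : (of fun i j => ∑ k, c i k * B i k j).det ≠ 0) :
    ∃ f : n → κ, (∀ i, c i (f i) ≠ 0) ∧ (of fun i => B i (f i)).det ≠ 0 := by
  rw [det_of_sum_rows] at h
  obtain ⟨f, -, hf⟩ := Finset.exists_ne_zero_of_sum_ne_zero h
  exact ⟨f, fun i hi => left_ne_zero_of_mul hf (Finset.prod_eq_zero (Finset.mem_univ i) hi),
    right_ne_zero_of_mul hf⟩

variable [Field K]

theorem det_submatrix_ne_zero_iff_linearIndependent [DecidableEq n]
    (M : Matrix m n K) (σ : n ≃ m) :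
    (M.submatrix σ id).det ≠ 0 ↔ LinearIndependent K M.row := by
  rw [← isUnit_iff_ne_zero, ← isUnit_iff_isUnit_det, ← linearIndependent_rows_iff_isUnit,
    ← linearIndependent_equiv σ]
  rfl

theorem det_submatrix_ne_zero_iff_mulVec_eq_zero [DecidableEq n]
    (M : Matrix m n K) (σ : n ≃ m) :
    (M.submatrix σ id).det ≠ 0 ↔ ∀ x, M *ᵥ x = 0 → x = 0 := by
  rw [Ne, ← exists_mulVec_eq_zero_iff]
  have : ∀ x, M.submatrix σ id *ᵥ x = 0 ↔ M *ᵥ x = 0 := fun x => by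
    rw [← Equiv.coe_refl, submatrix_mulVec_equiv]
    simpa [funext_iff] using σ.forall_congr_right (q := fun i => (M *ᵥ x) i = 0)
  simp only [this, not_exists, not_and, not_imp_not]

theorem rank_eq_card_iff_linearIndependent [Fintype m] (M : Matrix m n K) :
    M.rank = Fintype.card m ↔ LinearIndependent K M.row := by
  rw [rank_eq_finrank_span_row, linearIndependent_iff_card_eq_finrank_span, Set.finrank, eq_comm]

end Matrix

theorem LinearIndependent.card_le_card_of_forall_mem {τ ι K : Type*} [Fintype τ] [Field K]
    {w : τ → ι → K} (hw : LinearIndependent K w) {W : Submodule K (ι → K)}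
    (hwW : ∀ t, w t ∈ W) (T : Finset ι) (hT : ∀ x ∈ W, (∀ i ∈ T, x i = 0) → x = 0) :
    Fintype.card τ ≤ T.card := by
  let π : (ι → K) →ₗ[K] (T → K) := LinearMap.funLeft K K Subtype.val
  have hdisj : Disjoint (Submodule.span K (Set.range w)) (LinearMap.ker π) := by
    refine Submodule.disjoint_def.mpr fun x hx hker => hT x ?_ fun i hi => ?_
    · exact Submodule.span_le.mpr (Set.range_subset_iff.mpr hwW) hx
    · exact congr_fun (LinearMap.mem_ker.mp hker) ⟨i, hi⟩
  simpa using (hw.map hdisj).fintype_card_le_finrank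

section Blocks

variable {V K : Type*} [Field K]

def blockCol (b : Bool) (v : V) : V ⊕ V := if b then Sum.inl v else Sum.inr v

def inBlock (b : Bool) : (V → K) →ₗ[K] V ⊕ V → K :=
  LinearMap.pi <| Sum.elim (fun v => if b then LinearMap.proj v else 0)
    fun v => if b then 0 else LinearMap.proj v

theorem inBlock_comp_blockCol (b b' : Bool) (y : V → K) :
    inBlock b y ∘ blockCol b' = if b' = b then y else 0 := by
  funext v
  cases b <;> cases b' <;> simp [inBlock, blockCol]

theorem inBlock_dotProduct [Fintype V] (b : Bool) (y : V → K) (x : V ⊕ V → K) :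
    inBlock b y ⬝ᵥ x = y ⬝ᵥ (x ∘ blockCol b) := by
  cases b <;> simp [inBlock, blockCol, dotProduct, Fintype.sum_sum_type]

theorem eq_zero_of_forall_comp_blockCol_eq_zero {x : V ⊕ V → K}
    (hx : ∀ b, x ∘ blockCol b = 0) : x = 0 := by
  funext c
  rcases c with v | v
  · exact congr_fun (hx true) v
  · exact congr_fun (hx false) v

theorem LinearIndependent.card_le_two_mul_card {τ : Type*} [Fintype τ]
    {w : τ → V ⊕ V → K} (hw : LinearIndependent K w) {Y : Submodule K (V → K)}
    (hwY : ∀ t b, w t ∘ blockCol b ∈ Y) (T : Finset V)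
    (hT : ∀ y ∈ Y, (∀ v ∈ T, y v = 0) → y = 0) :
    Fintype.card τ ≤ 2 * T.card := by
  rw [two_mul, ← Finset.card_disjSum]
  refine hw.card_le_card_of_forall_mem (W := ⨅ b, Y.comap (LinearMap.funLeft K K (blockCol b)))
    (fun t => Submodule.mem_iInf _ |>.mpr fun b => hwY t b) _ fun x hx hxT => ?_
  refine eq_zero_of_forall_comp_blockCol_eq_zero fun b => hT _ (Submodule.mem_iInf _ |>.mp hx b)
    fun v hv => hxT _ ?_
  cases b <;> simpa [blockCol] using hv

end Blocks

namespace LGraph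

open Matrix

variable {V E L : Type} (G : LGraph V E L) (color : L → Bool) {P : E → Prop} {Q : L → Prop}

theorem subSG_adj_iff {u w : V} :
    (G.subSG P).Adj u w ↔ ∃ e, P e ∧ s((G.ends e).1, (G.ends e).2) = s(u, w) := by
  simp only [subSG, SimpleGraph.fromRel_adj]
  constructor
  · rintro ⟨-, ⟨e, he, hends⟩ | ⟨e, he, hends⟩⟩
    · exact ⟨e, he, by rw [hends]⟩
    · exact ⟨e, he, by rw [hends, Sym2.eq_swap]⟩
  · rintro ⟨e, he, hs⟩
    rcases Sym2.eq_iff.mp hs with ⟨rfl, rfl⟩ | ⟨rfl, rfl⟩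
    · exact ⟨G.ne e, Or.inl ⟨e, he, rfl⟩⟩
    · exact ⟨(G.ne e).symm, Or.inr ⟨e, he, rfl⟩⟩

theorem apply_eq_of_reachable {α : Type*} {y : V → α}
    (hy : ∀ e, P e → y (G.ends e).1 = y (G.ends e).2) {u w : V}
    (h : (G.subSG P).Reachable u w) : y u = y w := by
  obtain ⟨p⟩ := h
  induction p with
  | nil => rfl
  | cons hadj _ ih =>
    obtain ⟨e, he, hs⟩ := G.subSG_adj_iff.mp hadj
    rw [← ih]
    rcases Sym2.eq_iff.mp hs with ⟨rfl, rfl⟩ | ⟨rfl, rfl⟩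
    · exact hy e he
    · exact (hy e he).symm

variable {K : Type*} [Field K]

theorem forall_eq_zero_iff_forall_exists_loop :
    (∀ y : V → K, (∀ e, P e → y (G.ends e).1 = y (G.ends e).2) →
        (∀ l, Q l → y (G.loopAt l) = 0) → y = 0) ↔
      ∀ c : (G.subSG P).ConnectedComponent,
        ∃ l, Q l ∧ (G.subSG P).connectedComponentMk (G.loopAt l) = c := by
  classical
  constructor
  · intro h c
    by_contra! hno
    obtain ⟨v, hv⟩ := c.exists_rep
    let y : V → K := fun u => if (G.subSG P).connectedComponentMk u = c then 1 else 0
    have hy : y = 0 := h y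
      (fun e he => by
        simp only [y, SimpleGraph.ConnectedComponent.connectedComponentMk_eq_of_adj
          (G.subSG_adj_iff.mpr ⟨e, he, rfl⟩)])
      (fun l hl => if_neg (hno l hl))
    exact (by simpa [y] using congr_fun hy v : (G.subSG P).connectedComponentMk v ≠ c) hv
  · intro h y hP hQ
    funext v
    obtain ⟨l, hl, hc⟩ := h ((G.subSG P).connectedComponentMk v)
    rw [Pi.zero_apply, G.apply_eq_of_reachable hP (SimpleGraph.ConnectedComponent.exact hc.symm),
      hQ l hl]

variable [DecidableEq V]

variable (K) in
def incidence (e : E) : V → K := Pi.single (G.ends e).1 1 - Pi.single (G.ends e).2 1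

variable (K) in
def rowVec : E ⊕ L → V → K := Sum.elim (G.incidence K) fun l => Pi.single (G.loopAt l) 1

theorem incidence_apply (e : E) (v : V) :
    G.incidence K e v = if v = (G.ends e).1 then 1 else if v = (G.ends e).2 then -1 else 0 := by
  have := G.ne e
  simp only [incidence, Pi.sub_apply, Pi.single_apply]
  split_ifs <;> simp_all

theorem sum_incidence [Fintype V] (e : E) : ∑ v, G.incidence K e v = 0 := by
  simp [incidence, Finset.sum_sub_distrib]

theorem incidence_mem_pi_compl {S : Finset V} {e : E} (he₁ : (G.ends e).1 ∈ S)
    (he₂ : (G.ends e).2 ∈ S) :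
    G.incidence K e ∈ Submodule.pi (R := K) (↑S)ᶜ fun _ => ⊥ := by
  refine Submodule.mem_pi.mpr fun v hv => ?_
  rw [Submodule.mem_bot, incidence_apply, if_neg (ne_of_mem_of_not_mem he₁ hv).symm,
    if_neg (ne_of_mem_of_not_mem he₂ hv).symm]

theorem span_incidence_eq {e : E} {u w : V} (hs : s((G.ends e).1, (G.ends e).2) = s(u, w)) :
    K ∙ G.incidence K e = K ∙ (Pi.single u 1 - Pi.single w 1) := by
  rcases Sym2.eq_iff.mp hs with ⟨rfl, rfl⟩ | ⟨rfl, rfl⟩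
  · rfl
  · rw [← Submodule.span_neg, Set.neg_singleton, incidence, neg_sub]

theorem single_sub_single_mem_span_of_walk {u w : V} (p : (G.subSG P).Walk u w)
    {T : Set (E ⊕ L)}
    (hT : ∀ e, P e → s((G.ends e).1, (G.ends e).2) ∈ p.edges → Sum.inl e ∈ T) :
    (Pi.single u 1 - Pi.single w 1 : V → K) ∈ Submodule.span K (G.rowVec K '' T) := by
  induction p with
  | nil => simp
  | @cons u x w hadj p ih =>
    obtain ⟨e, he, hs⟩ := G.subSG_adj_iff.mp hadj
    have hsplit : (Pi.single u 1 - Pi.single w 1 : V → K)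
        = (Pi.single u 1 - Pi.single x 1) + (Pi.single x 1 - Pi.single w 1) := by abel
    rw [hsplit]
    refine add_mem ?_ (ih fun e' he' hp => hT e' he' (List.mem_cons_of_mem _ hp))
    have he_mem : G.rowVec K (Sum.inl e) ∈ G.rowVec K '' T :=
      Set.mem_image_of_mem _ (hT e he (by simp [hs]))
    refine (Submodule.span_singleton_le_iff_mem _ _).mpr (Submodule.subset_span he_mem) ?_
    rw [rowVec, Sum.elim_inl, G.span_incidence_eq hs]
    exact Submodule.mem_span_singleton_self _

theorem eq_of_linearIndepOn (hli : LinearIndepOn K (G.rowVec K) {i | Sum.elim P Q i}) {e f : E}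
    (he : P e) (hf : P f)
    (hs : s((G.ends e).1, (G.ends e).2) = s((G.ends f).1, (G.ends f).2)) : e = f := by
  by_contra hne
  refine linearIndepOn_iff_notMem_span.mp hli (Sum.inl e) he ?_
  have hf_mem : G.rowVec K (Sum.inl f) ∈ G.rowVec K '' ({i | Sum.elim P Q i} \ {Sum.inl e}) :=
    Set.mem_image_of_mem _ ⟨hf, by simpa using Ne.symm hne⟩
  refine (Submodule.span_singleton_le_iff_mem _ _).mpr (Submodule.subset_span hf_mem) ?_
  rw [rowVec, Sum.elim_inl, G.span_incidence_eq hs.symm]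
  exact Submodule.mem_span_singleton_self _

theorem isAcyclic_of_linearIndepOn (hli : LinearIndepOn K (G.rowVec K) {i | Sum.elim P Q i}) :
    (G.subSG P).IsAcyclic := by
  intro v c hc
  cases c with
  | nil => exact SimpleGraph.Walk.not_isCycle_nil hc
  | @cons _ x _ hadj p =>
    obtain ⟨-, hnotmem⟩ := (p.cons_isCycle_iff hadj).mp hc
    obtain ⟨e, he, hs⟩ := G.subSG_adj_iff.mp hadj
    refine linearIndepOn_iff_notMem_span.mp hli (Sum.inl e) he ?_
    have hp := G.single_sub_single_mem_span_of_walk (K := K) p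
      (T := {i | Sum.elim P Q i} \ {Sum.inl e}) fun e' he' hmem =>
        ⟨he', by rintro ⟨⟩; exact hnotmem (hs ▸ hmem)⟩
    refine (Submodule.span_singleton_le_iff_mem _ _).mpr hp ?_
    rw [rowVec, Sum.elim_inl, ← G.span_incidence_eq (hs.trans Sym2.eq_swap)]
    exact Submodule.mem_span_singleton_self _

theorem subsingleton_loops_of_linearIndepOn
    (hli : LinearIndepOn K (G.rowVec K) {i | Sum.elim P Q i})
    (c : (G.subSG P).ConnectedComponent) :
    Subsingleton {l // Q l ∧ (G.subSG P).connectedComponentMk (G.loopAt l) = c} := by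
  constructor
  rintro ⟨l₁, hl₁, hc₁⟩ ⟨l₂, hl₂, hc₂⟩
  by_contra hne
  obtain ⟨p⟩ := SimpleGraph.ConnectedComponent.exact (hc₁.trans hc₂.symm)
  refine linearIndepOn_iff_notMem_span.mp hli (Sum.inr l₁) hl₁ ?_
  have hp := G.single_sub_single_mem_span_of_walk (K := K) p
    (T := {i | Sum.elim P Q i} \ {Sum.inr l₁}) fun e he _ => ⟨he, by simp⟩
  have hl₂_mem :
      G.rowVec K (Sum.inr l₂) ∈ G.rowVec K '' ({i | Sum.elim P Q i} \ {Sum.inr l₁}) :=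
    Set.mem_image_of_mem _ ⟨hl₂, by simpa [eq_comm] using hne⟩
  have hsplit : G.rowVec K (Sum.inr l₁)
      = (Pi.single (G.loopAt l₁) 1 - Pi.single (G.loopAt l₂) 1)
        + G.rowVec K (Sum.inr l₂) := by
    simp [rowVec]
  rw [hsplit]
  exact add_mem hp (Submodule.subset_span hl₂_mem)

section ColoredMatrix

variable (K) in
def coloredMatrix (h : E ⊕ L → Bool) : Matrix (E ⊕ L) (V ⊕ V) K :=
  Matrix.of fun i => inBlock (h i) (G.rowVec K i)

theorem linearIndepOn_rowVec_of_linearIndependent {h : E ⊕ L → Bool}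
    (hli : LinearIndependent K (G.coloredMatrix K h).row) (b : Bool) :
    LinearIndepOn K (G.rowVec K) {i | h i = b} := by
  refine LinearIndepOn.of_comp (inBlock b) ?_
  refine (linearIndepOn_univ_iff.mpr hli |>.mono (Set.subset_univ _)).congr fun i hi => ?_
  change inBlock (h i) _ = _
  rw [show h i = b from hi, Function.comp_apply]

variable [Fintype V]

theorem forall_coloredMatrix_mulVec_eq_zero_iff {h : E ⊕ L → Bool} :
    (∀ x, G.coloredMatrix K h *ᵥ x = 0 → x = 0) ↔
      ∀ b, ∀ y : V → K, (∀ i, h i = b → G.rowVec K i ⬝ᵥ y = 0) → y = 0 := by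
  have hmulVec : ∀ x, G.coloredMatrix K h *ᵥ x = 0 ↔
      ∀ i, G.rowVec K i ⬝ᵥ (x ∘ blockCol (h i)) = 0 := fun x => by
    simp [_root_.funext_iff, mulVec, coloredMatrix, inBlock_dotProduct]
  simp only [hmulVec]
  constructor
  · intro hker b y hy
    have hx := hker (inBlock b y) fun i => by
      rw [inBlock_comp_blockCol]
      split_ifs with hi
      · exact hy i hi
      · exact dotProduct_zero _
    simpa [hx, eq_comm] using inBlock_comp_blockCol b b y
  · intro hker x hx
    exact eq_zero_of_forall_comp_blockCol_eq_zero fun b => hker b _ fun i hi => hi ▸ hx i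

theorem det_coloredMatrix_ne_zero_iff (σ : V ⊕ V ≃ E ⊕ L) (g : E → Bool) :
    ((G.coloredMatrix K (Sum.elim g color)).submatrix σ id).det ≠ 0 ↔
      ∀ b, G.IsLoopedForestOn (fun e => g e = b) (fun l => color l = b) := by
  have hker : ∀ b,
      (∀ y : V → K, (∀ i, Sum.elim g color i = b → G.rowVec K i ⬝ᵥ y = 0) → y = 0) ↔
        ∀ c : (G.subSG fun e => g e = b).ConnectedComponent, ∃ l, color l = b ∧
          (G.subSG fun e => g e = b).connectedComponentMk (G.loopAt l) = c := by
    intro b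
    rw [← G.forall_eq_zero_iff_forall_exists_loop (K := K)]
    simp [Sum.forall, rowVec, incidence, sub_eq_zero]
  have hset : ∀ b, {i | Sum.elim g color i = b}
      = {i | Sum.elim (fun e => g e = b) (fun l => color l = b) i} := fun b => by
    ext (_ | _) <;> rfl
  constructor
  · intro hdet b
    have hli := G.linearIndepOn_rowVec_of_linearIndependent
      ((det_submatrix_ne_zero_iff_linearIndependent _ σ).mp hdet) b
    rw [hset] at hli
    have hloops := (hker b).mp ((G.forall_coloredMatrix_mulVec_eq_zero_iff).mp
      ((det_submatrix_ne_zero_iff_mulVec_eq_zero _ σ).mp hdet) b)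
    refine ⟨fun e f he hf => G.eq_of_linearIndepOn hli he hf, G.isAcyclic_of_linearIndepOn hli,
      fun c => Nat.card_eq_one_iff_unique.mpr
        ⟨G.subsingleton_loops_of_linearIndepOn hli c, ?_⟩⟩
    obtain ⟨l, hl⟩ := hloops c
    exact ⟨⟨l, hl⟩⟩
  · intro hforest
    rw [det_submatrix_ne_zero_iff_mulVec_eq_zero, G.forall_coloredMatrix_mulVec_eq_zero_iff]
    refine fun b => (hker b).mpr fun c => ?_
    obtain ⟨⟨l, hl⟩⟩ := (Nat.card_eq_one_iff_unique.mp ((hforest b).2.2 c)).2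
    exact ⟨l, hl⟩

end ColoredMatrix

/-- Loop rows are also written as sums over both colours, with the indicator of their own colour
as coefficient, so that every row of `genericMatrix` has the shape used in
`Matrix.det_of_sum_rows`. -/
noncomputable def rowCoeff : E ⊕ L → Bool → MvPolynomial (E ⊕ E) ℝ
  | Sum.inl e, b => X (if b then Sum.inl e else Sum.inr e)
  | Sum.inr l, b => if b = color l then 1 else 0

noncomputable def genericMatrix : Matrix (E ⊕ L) (V ⊕ V) (MvPolynomial (E ⊕ E) ℝ) :=
  of fun i c => ∑ b, rowCoeff color i b * C (inBlock b (G.rowVec ℝ i) c)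

theorem M202c_eq_map_genericMatrix :
    M202c G color = (G.genericMatrix color).map (algebraMap _ (EdgeField E)) := by
  ext (e | l) (v | v)
  all_goals
    simp only [M202c, genericMatrix, rowCoeff, rowVec, inBlock, edgeVar,
      map_apply, of_apply, Fintype.sum_bool]
    split_ifs <;> simp_all [Pi.single_apply, incidence_apply]

theorem genericMatrix_map_eval (g : E → Bool) :
    (G.genericMatrix color).map
        (eval (Sum.elim (fun e => if g e then 1 else 0) fun e => if g e then 0 else 1))
      = G.coloredMatrix ℝ (Sum.elim g color) := by
  ext (e | l) c
  · cases hg : g e <;> simp [genericMatrix, coloredMatrix, rowCoeff, hg]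
  · cases hc : color l <;> simp [genericMatrix, coloredMatrix, rowCoeff, hc]

theorem det_genericMatrix_ne_zero_iff [Fintype V] [Fintype E] [Fintype L]
    (σ : V ⊕ V ≃ E ⊕ L) :
    ((G.genericMatrix color).submatrix σ id).det ≠ 0 ↔
      ∃ g : E → Bool, ((G.coloredMatrix ℝ (Sum.elim g color)).submatrix σ id).det ≠ 0 := by
  constructor
  · intro hdet
    obtain ⟨f, hcoeff, hdet'⟩ := exists_det_ne_zero_of_det_of_sum_rows_ne_zero
      (c := fun i => rowCoeff color (σ i))
      (B := fun i b j => C (inBlock b (G.rowVec ℝ (σ i)) j))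
      hdet
    have hloop : ∀ l, f (σ.symm (Sum.inr l)) = color l := fun l => by
      simpa [rowCoeff] using hcoeff (σ.symm (Sum.inr l))
    have hcolor : Sum.elim (f ∘ σ.symm ∘ Sum.inl) color = f ∘ σ.symm := by
      ext (e | l)
      · rfl
      · exact (hloop l).symm
    refine ⟨f ∘ σ.symm ∘ Sum.inl, fun h0 => hdet' ?_⟩
    have hmap :
        (of fun i j => (C (inBlock (f i) (G.rowVec ℝ (σ i)) j) : MvPolynomial (E ⊕ E) ℝ))
        = ((G.coloredMatrix ℝ (f ∘ σ.symm)).submatrix σ id).map C := by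
      ext i j
      simp [coloredMatrix]
    rw [hmap, ← RingHom.mapMatrix_apply, ← RingHom.map_det, ← hcolor, h0, map_zero]
  · rintro ⟨g, hg⟩ h0
    apply hg
    rw [← G.genericMatrix_map_eval color g, submatrix_map, ← RingHom.mapMatrix_apply,
      ← RingHom.map_det, h0, map_zero]

theorem M202c_inl_comp_blockCol (e : E) (b : Bool) :
    M202c G color (Sum.inl e) ∘ blockCol b
      = edgeVar E (if b then Sum.inl e else Sum.inr e) • G.incidence _ e := by
  funext v
  cases b <;> simp [M202c, blockCol, incidence_apply]

theorem M202c_inr_comp_blockCol (l : L) (b : Bool) :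
    M202c G color (Sum.inr l) ∘ blockCol b
      = if b = color l then Pi.single (G.loopAt l) 1 else 0 := by
  funext v
  cases b <;> cases hc : color l <;> simp [M202c, blockCol, Pi.single_apply, hc]

theorem linearIndependent_M202c_iff [Fintype V] [Fintype E] [Fintype L] (σ : V ⊕ V ≃ E ⊕ L) :
    LinearIndependent (EdgeField E) (M202c G color).row ↔
      ∃ g : E → Bool, ∀ b, G.IsLoopedForestOn (fun e => g e = b) (fun l => color l = b) := by
  rw [← det_submatrix_ne_zero_iff_linearIndependent _ σ, M202c_eq_map_genericMatrix,
    submatrix_map, ← RingHom.mapMatrix_apply, ← RingHom.map_det,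
    map_ne_zero_iff _ (IsFractionRing.injective _ _), det_genericMatrix_ne_zero_iff]
  simp only [det_coloredMatrix_ne_zero_iff]

theorem edgeCount_add_loopCount_le [Fintype E] [Fintype L]
    (hli : LinearIndependent (EdgeField E) (M202c G color).row) (S : Finset V) :
    G.edgeCount S + G.loopCount S ≤ 2 * S.card := by
  have hw := hli.comp
    (Sum.map (Subtype.val : {e // (G.ends e).1 ∈ S ∧ (G.ends e).2 ∈ S} → E)
      (Subtype.val : {l // G.loopAt l ∈ S} → L))
    (Sum.map_injective.mpr ⟨Subtype.val_injective, Subtype.val_injective⟩)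
  have := hw.card_le_two_mul_card (Y := Submodule.pi (↑S)ᶜ fun _ => ⊥) ?_ S ?_
  · simpa [edgeCount, loopCount, Nat.card_eq_fintype_card] using this
  · rintro (⟨e, he₁, he₂⟩ | ⟨l, hl⟩) b
    · change M202c G color (Sum.inl e) ∘ blockCol b ∈ _
      rw [M202c_inl_comp_blockCol]
      exact Submodule.smul_mem _ _ (G.incidence_mem_pi_compl he₁ he₂)
    · change M202c G color (Sum.inr l) ∘ blockCol b ∈ _
      rw [M202c_inr_comp_blockCol]
      split_ifs
      · exact Submodule.mem_pi.mpr fun v hv => by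
          simp [(ne_of_mem_of_not_mem hl hv).symm]
      · exact zero_mem _
  · intro y hy hS
    funext v
    by_cases hv : v ∈ S
    · exact hS v hv
    · exact Submodule.mem_pi.mp hy v hv

theorem edgeCount_le [Fintype V] [Fintype E]
    (hli : LinearIndependent (EdgeField E) (M202c G color).row) (S : Finset V) :
    G.edgeCount S ≤ 2 * S.card - 2 := by
  rcases S.eq_empty_or_nonempty with rfl | ⟨v₀, hv₀⟩
  · simp [edgeCount]
  have hw := hli.comp
    (Sum.inl ∘ (Subtype.val : {e // (G.ends e).1 ∈ S ∧ (G.ends e).2 ∈ S} → E))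
    (Sum.inl_injective.comp Subtype.val_injective)
  have := hw.card_le_two_mul_card
    (Y := (Submodule.pi (↑S)ᶜ fun _ => ⊥) ⊓ LinearMap.ker (∑ v, LinearMap.proj v)) ?_
    (S.erase v₀) ?_
  · rw [Finset.card_erase_of_mem hv₀] at this
    have := Finset.card_pos.mpr ⟨v₀, hv₀⟩
    simp only [edgeCount, Nat.card_eq_fintype_card]
    omega
  · rintro ⟨e, he₁, he₂⟩ b
    change M202c G color (Sum.inl e) ∘ blockCol b ∈ _
    rw [M202c_inl_comp_blockCol]
    exact Submodule.smul_mem _ _ ⟨G.incidence_mem_pi_compl he₁ he₂, by simp [sum_incidence]⟩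
  · rintro y ⟨hyS, hysum⟩ hyT
    have hvanish : ∀ v ≠ v₀, y v = 0 := fun v hv => by
      by_cases hvS : v ∈ S
      · exact hyT v (Finset.mem_erase.mpr ⟨hv, hvS⟩)
      · exact Submodule.mem_pi.mp hyS v hvS
    have hy₀ : y v₀ = 0 := by
      rw [← Fintype.sum_eq_single v₀ hvanish]
      simpa using hysum
    funext v
    by_cases hv : v = v₀
    · rw [hv, hy₀, Pi.zero_apply]
    · exact hvanish v hv

end LGraph

/-- **`M^c_{2,0,2}` detects the color-looped-(2,2) property.** -/
theorem M202c_rank_iff_colorLooped22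
    {V E L : Type} [Fintype V] [Fintype E] [Fintype L] [DecidableEq V]
    (G : LGraph V E L) (color : L → Bool)
    (hmc : Fintype.card E + Fintype.card L = 2 * Fintype.card V) :
    (M202c G color).rank = 2 * Fintype.card V ↔ G.IsColorLooped22 color := by
  let σ : V ⊕ V ≃ E ⊕ L := Fintype.equivOfCardEq (by simp only [Fintype.card_sum]; omega)
  rw [← hmc, ← Fintype.card_sum, Matrix.rank_eq_card_iff_linearIndependent]
  constructor
  · intro hli
    exact ⟨⟨G.edgeCount_le color hli, G.edgeCount_add_loopCount_le color hli, hmc⟩,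
      (G.linearIndependent_M202c_iff color σ).mp hli⟩
  · rintro ⟨-, hforests⟩
    exact (G.linearIndependent_M202c_iff color σ).mpr hforests
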